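/- Let m ≥ 2 and 1 ≤ ℓ < m. The gonality of the Ferrers rook graph R(S(m,2,ℓ)), where S(m,2,ℓ) is a single row of m boxes together with a second row of ℓ boxes, equals m − 1. -/

import Mathlib

open Finset

open scoped Classical

/-- A divisor is effective if it is nonnegative everywhere. -/
def Effective {V : Type*} (D : V → ℤ) : Prop := ∀ v, 0 ≤ D v

/-- The degree of a divisor: the total number of chips. -/
def degD {V : Type*} [Fintype V] (D : V → ℤ) : ℤ := ∑ v, D v

/-- The effect on a vertex `w` of firing each vertex `u` with multiplicity `f u`. -/
noncomputable def lap {V : Type*} [Fintype V] (G : SimpleGraph V) (f : V → ℤ) (w : V) : ℤ :=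
  (∑ u, f u * (if G.Adj u w then 1 else 0)) - f w * (∑ u, if G.Adj u w then (1 : ℤ) else 0)

/-- Two divisors are (chip-firing) equivalent if one is obtained from the other by a
sequence of chip-firing moves, i.e. they differ by a Laplacian of some `f : V → ℤ`. -/
def LinEquiv {V : Type*} [Fintype V] (G : SimpleGraph V) (D D' : V → ℤ) : Prop :=
  ∃ f : V → ℤ, ∀ w, D' w = D w + lap G f w

/-- A divisor has positive rank if for every vertex there is an equivalent effective
divisor with a chip at that vertex. -/
def PositiveRank {V : Type*} [Fintype V] (G : SimpleGraph V) (D : V → ℤ) : Prop :=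
  ∀ v, ∃ D', LinEquiv G D D' ∧ Effective D' ∧ 0 < D' v

/-- A Ferrers diagram: a finite subset of ℕ² with coordinates ≥ 1, closed under
decreasing either coordinate toward 1. -/
def IsFerrers (F : Finset (ℕ × ℕ)) : Prop :=
  ∀ p ∈ F, 1 ≤ p.1 ∧ 1 ≤ p.2 ∧ (p.1 = 1 ∨ (p.1 - 1, p.2) ∈ F) ∧ (p.2 = 1 ∨ (p.1, p.2 - 1) ∈ F)

/-- The Ferrers rook graph: vertices are points of `F`, two distinct points adjacent
iff they share a row or a column. -/
def rookGraph (F : Finset (ℕ × ℕ)) : SimpleGraph {p // p ∈ F} where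
  Adj a b := a ≠ b ∧ ((a : ℕ × ℕ).1 = (b : ℕ × ℕ).1 ∨ (a : ℕ × ℕ).2 = (b : ℕ × ℕ).2)
  symm := ⟨fun a b h => ⟨h.1.symm, h.2.imp Eq.symm Eq.symm⟩⟩
  loopless := ⟨fun a h => h.1 rfl⟩

/-- The set of degrees of positive-rank divisors on `R(F)`; its least element is the gonality. -/
def gonSet (F : Finset (ℕ × ℕ)) : Set ℤ :=
  {d | ∃ D : {p // p ∈ F} → ℤ, PositiveRank (rookGraph F) D ∧ degD D = d}

/-- The divisor `D_{x,y}`: one chip on each vertex not in column `x` and not in row `y`. -/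
def Dxy (F : Finset (ℕ × ℕ)) (x y : ℕ) : {p // p ∈ F} → ℤ :=
  fun p => if (p : ℕ × ℕ).1 ≠ x ∧ (p : ℕ × ℕ).2 ≠ y then 1 else 0

/-- The Ferrers diagram `S(m,2,ℓ)`: a row of `m` boxes and a second row of `ℓ` boxes. -/
def Sm2l (m ℓ : ℕ) : Finset (ℕ × ℕ) :=
  ((Finset.Icc 1 m) ×ˢ {1}) ∪ ((Finset.Icc 1 ℓ) ×ˢ {2})

/-!
Upper bound: the `m - 1` chips of `D_{m,2}` reach `(m,1)` by firing every other vertex, and row 2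
by firing row 1.

Lower bound: if `E` and `E + Δh` are both effective, every superlevel set of `h` carries at
least as many chips of `E` as there are edges leaving it. With fewer than `m - 1` chips this
forces `h` to be constant on row 1, a clique of size `m`. The overhang of row 1 then has no
neighbours off row 1, so an effective divisor of positive rank has a chip on each of its `m - ℓ`
boxes; raising or lowering part of row 2 relative to row 1 would cost `ℓ` further chips. Hence
every move is trivial, and `E` needs a chip on every vertex.
-/

section ChipFiring

variable {V : Type*} [Fintype V] {G : SimpleGraph V}

theorem lap_eq_sum (f : V → ℤ) (w : V) :
    lap G f w = ∑ u, if G.Adj u w then f u - f w else 0 := by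
  rw [lap, Finset.mul_sum, ← Finset.sum_sub_distrib]
  exact Finset.sum_congr rfl fun u _ => by split_ifs <;> ring

theorem lap_add (f g : V → ℤ) (w : V) : lap G (f + g) w = lap G f w + lap G g w := by
  simp only [lap_eq_sum, ← Finset.sum_add_distrib, Pi.add_apply]
  exact Finset.sum_congr rfl fun u _ => by split_ifs <;> ring

theorem lap_neg (f : V → ℤ) (w : V) : lap G (-f) w = -lap G f w := by
  simp only [lap_eq_sum, ← Finset.sum_neg_distrib, Pi.neg_apply]
  exact Finset.sum_congr rfl fun u _ => by split_ifs <;> ring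

theorem lap_eq_zero_of_forall_adj {f : V → ℤ} {w : V} (h : ∀ u, G.Adj u w → f u = f w) :
    lap G f w = 0 := by
  rw [lap_eq_sum]
  exact Finset.sum_eq_zero fun u _ => by by_cases hu : G.Adj u w <;> simp [hu, h]

/-- Edges inside `A` contribute nothing: their two orientations cancel. -/
theorem sum_lap_eq_sum_compl (f : V → ℤ) (A : Finset V) :
    ∑ v ∈ A, lap G f v = ∑ v ∈ A, ∑ u ∈ Aᶜ, if G.Adj u v then f u - f v else 0 := by
  set g : V → V → ℤ := fun u v => if G.Adj u v then f u - f v else 0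
  have hanti : ∀ u v, g u v = -g v u := fun u v => by
    simp only [g, G.adj_comm u v]; split_ifs <;> ring
  have hinner : ∑ v ∈ A, ∑ u ∈ A, g u v = 0 := by
    have := calc ∑ v ∈ A, ∑ u ∈ A, g u v
        = ∑ u ∈ A, ∑ v ∈ A, g u v := Finset.sum_comm
      _ = -∑ v ∈ A, ∑ u ∈ A, g u v := by
        rw [← Finset.sum_neg_distrib]
        refine Finset.sum_congr rfl fun u _ => ?_
        rw [← Finset.sum_neg_distrib]
        exact Finset.sum_congr rfl fun v _ => hanti u v
    linarith
  calc ∑ v ∈ A, lap G f v = ∑ v ∈ A, (∑ u ∈ A, g u v + ∑ u ∈ Aᶜ, g u v) :=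
        Finset.sum_congr rfl fun v _ => by rw [Finset.sum_add_sum_compl, lap_eq_sum]
    _ = ∑ v ∈ A, ∑ u ∈ Aᶜ, g u v := by rw [Finset.sum_add_distrib, hinner, zero_add]

theorem sum_lap (f : V → ℤ) : ∑ v, lap G f v = 0 := by
  simp [sum_lap_eq_sum_compl]

theorem LinEquiv.refl (D : V → ℤ) : LinEquiv G D D :=
  ⟨0, fun w => by simp [lap]⟩

theorem LinEquiv.symm {D D' : V → ℤ} (h : LinEquiv G D D') : LinEquiv G D' D := by
  obtain ⟨f, hf⟩ := h
  exact ⟨-f, fun w => by rw [lap_neg, hf]; ring⟩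

theorem LinEquiv.trans {D D' D'' : V → ℤ} (h : LinEquiv G D D') (h' : LinEquiv G D' D'') :
    LinEquiv G D D'' := by
  obtain ⟨f, hf⟩ := h
  obtain ⟨g, hg⟩ := h'
  exact ⟨f + g, fun w => by rw [lap_add, hg, hf]; ring⟩

theorem LinEquiv.degD_eq {D D' : V → ℤ} (h : LinEquiv G D D') : degD D' = degD D := by
  obtain ⟨f, hf⟩ := h
  simp only [degD, hf, Finset.sum_add_distrib, sum_lap, add_zero]

theorem sum_le_degD {E : V → ℤ} (hE : Effective E) (A : Finset V) :
    ∑ v ∈ A, E v ≤ degD E :=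
  Finset.sum_le_univ_sum_of_nonneg hE

noncomputable def cutSize (G : SimpleGraph V) (A : Finset V) : ℕ :=
  ∑ v ∈ A, #{u ∈ Aᶜ | G.Adj u v}

theorem card_mul_le_cutSize {A B : Finset V} {k : ℕ} (hBA : B ⊆ A)
    (hk : ∀ v ∈ B, k ≤ #{u ∈ Aᶜ | G.Adj u v}) : #B * k ≤ cutSize G A :=
  calc #B * k = ∑ _v ∈ B, k := by rw [Finset.sum_const, smul_eq_mul]
    _ ≤ ∑ v ∈ B, #{u ∈ Aᶜ | G.Adj u v} := Finset.sum_le_sum hk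
    _ ≤ cutSize G A := Finset.sum_le_sum_of_subset hBA

/-- Firing `f` moves at least one chip out of the superlevel set along each edge leaving it. -/
theorem cutSize_le_sum_of_effective {E f : V → ℤ} (hE : Effective fun w => E w + lap G f w)
    (t : ℤ) : (cutSize G {v | t ≤ f v} : ℤ) ≤ ∑ v ∈ {v | t ≤ f v}, E v := by
  set A : Finset V := {v | t ≤ f v}
  have hlap : ∑ v ∈ A, lap G f v ≤ -cutSize G A := by
    rw [sum_lap_eq_sum_compl, cutSize, Nat.cast_sum, ← Finset.sum_neg_distrib]
    refine Finset.sum_le_sum fun v hv => ?_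
    rw [Finset.card_filter, Nat.cast_sum, ← Finset.sum_neg_distrib]
    refine Finset.sum_le_sum fun u hu => ?_
    simp only [A, Finset.mem_compl, Finset.mem_filter, Finset.mem_univ, true_and,
      not_le] at hu hv
    split_ifs <;> omega
  have := Finset.sum_nonneg fun v (_ : v ∈ A) => hE v
  rw [Finset.sum_add_distrib] at this
  linarith

theorem eq_on_clique_of_effective {E h : V → ℤ} {K : Finset V} (hK : G.IsClique (K : Set V))
    (hE : Effective E) (hEh : Effective fun w => E w + lap G h w) (hdeg : degD E + 1 < #K) :
    ∀ u ∈ K, ∀ v ∈ K, h u = h v := by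
  suffices key : ∀ u ∈ K, ∀ v ∈ K, ¬h u < h v by
    intro u hu v hv
    exact le_antisymm (not_lt.mp (key v hv u hu)) (not_lt.mp (key u hu v hv))
  intro u hu v hv huv
  set A : Finset V := {w | h v ≤ h w}
  set K₁ := K.filter (fun w => h v ≤ h w)
  set K₂ := K.filter (fun w => ¬h v ≤ h w)
  have hK₁ : 1 ≤ #K₁ := Finset.card_pos.mpr ⟨v, by simp [K₁, hv]⟩
  have hK₂ : 1 ≤ #K₂ := Finset.card_pos.mpr ⟨u, by simp [K₂, hu, huv]⟩
  have hsplit : #K₁ + #K₂ = #K := Finset.card_filter_add_card_filter_not _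
  -- Every pair of `K₁ × K₂` is an edge leaving the superlevel set `A`.
  have hcut : #K₁ * #K₂ ≤ cutSize G A := by
    refine card_mul_le_cutSize (fun w hw => by simp_all [K₁, A]) fun w hw => ?_
    refine Finset.card_le_card fun z hz => ?_
    simp only [K₁, K₂, A, Finset.mem_filter, Finset.mem_compl, Finset.mem_univ,
      true_and] at hw hz ⊢
    exact ⟨hz.2, hK hz.1 hw.1 (by rintro rfl; exact hz.2 hw.2)⟩
  have : (cutSize G A : ℤ) ≤ ∑ w ∈ A, E w := cutSize_le_sum_of_effective hEh (h v)
  have := sum_le_degD hE A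
  have : #K₁ + #K₂ ≤ #K₁ * #K₂ + 1 := by nlinarith
  omega

theorem lap_indicator_of_mem [DecidableEq V] {S : Finset V} {w : V} (hw : w ∈ S) :
    lap G (fun u => if u ∈ S then 1 else 0) w = -#{u ∈ Sᶜ | G.Adj u w} := by
  have : Sᶜ.filter (G.Adj · w) = Finset.univ.filter (fun u => u ∉ S ∧ G.Adj u w) := by
    ext; simp
  rw [this, Finset.card_filter, lap_eq_sum, Nat.cast_sum, ← Finset.sum_neg_distrib]
  exact Finset.sum_congr rfl fun u _ => by
    by_cases hu : u ∈ S <;> by_cases ha : G.Adj u w <;> simp [hu, ha, hw]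

theorem lap_indicator_of_notMem [DecidableEq V] {S : Finset V} {w : V} (hw : w ∉ S) :
    lap G (fun u => if u ∈ S then 1 else 0) w = #{u ∈ S | G.Adj u w} := by
  rw [Finset.card_filter, lap_eq_sum, Nat.cast_sum, ← Finset.sum_subset (Finset.subset_univ S)]
  · exact Finset.sum_congr rfl fun u hu => by by_cases ha : G.Adj u w <;> simp [hu, ha, hw]
  · exact fun u _ hu => by by_cases ha : G.Adj u w <;> simp [hu, ha, hw]

end ChipFiring

theorem rookGraph_adj_iff {F : Finset (ℕ × ℕ)} {a b : {p // p ∈ F}} :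
    (rookGraph F).Adj a b ↔
      ¬(a.1.1 = b.1.1 ∧ a.1.2 = b.1.2) ∧ (a.1.1 = b.1.1 ∨ a.1.2 = b.1.2) := by
  change a ≠ b ∧ _ ↔ _
  rw [ne_eq, Subtype.ext_iff, Prod.ext_iff]

namespace Sm2l

variable {m ℓ : ℕ}

local notation "𝔹" => {p // p ∈ Sm2l m ℓ}
local notation "𝓡" => rookGraph (Sm2l m ℓ)

theorem mem_iff {p : ℕ × ℕ} :
    p ∈ Sm2l m ℓ ↔ 1 ≤ p.1 ∧ (p.2 = 1 ∧ p.1 ≤ m ∨ p.2 = 2 ∧ p.1 ≤ ℓ) := by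
  obtain ⟨x, y⟩ := p
  simp only [Sm2l, Finset.mem_union, Finset.mem_product, Finset.mem_Icc, Finset.mem_singleton]
  omega

theorem card_eq_of_bijOn_column {n : ℕ} {S : Finset 𝔹}
    (hmaps : ∀ v ∈ S, 1 ≤ v.1.1 ∧ v.1.1 ≤ n)
    (hinj : ∀ v ∈ S, ∀ w ∈ S, v.1.1 = w.1.1 → v = w)
    (hsurj : ∀ x, 1 ≤ x → x ≤ n → ∃ v ∈ S, v.1.1 = x) : #S = n := by
  calc #S = #(Finset.Icc 1 n) := by
        refine Finset.card_nbij (fun v => v.1.1) (fun v hv => Finset.mem_Icc.mpr (hmaps v hv))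
          (fun v hv w hw => hinj v hv w hw) fun x hx => ?_
        obtain ⟨v, hv, rfl⟩ := hsurj x (Finset.mem_Icc.mp hx).1 (Finset.mem_Icc.mp hx).2
        exact ⟨v, hv, rfl⟩
    _ = n := by simp

def row1 (m ℓ : ℕ) : Finset {p // p ∈ Sm2l m ℓ} := {v | v.1.2 = 1}

def row2 (m ℓ : ℕ) : Finset {p // p ∈ Sm2l m ℓ} := {v | v.1.2 = 2}

/-- The boxes of row 1 with no box above them. -/
def overhang (m ℓ : ℕ) : Finset {p // p ∈ Sm2l m ℓ} := {v | ℓ < v.1.1}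

theorem mk_one_mem {x : ℕ} (hx : 1 ≤ x) (hxm : x ≤ m) : (x, 1) ∈ Sm2l m ℓ :=
  mem_iff.mpr ⟨hx, Or.inl ⟨rfl, hxm⟩⟩

theorem card_row1 : #(row1 m ℓ) = m := by
  refine card_eq_of_bijOn_column (fun v hv => ?_) (fun v hv w hw hvw => ?_) fun x hx hxm => ?_
  · have := mem_iff.mp v.2; simp only [row1, Finset.mem_filter] at hv; omega
  · simp only [row1, Finset.mem_filter] at hv hw
    exact Subtype.ext (Prod.ext hvw (hv.2.trans hw.2.symm))
  · exact ⟨⟨(x, 1), mk_one_mem hx hxm⟩, by simp [row1], rfl⟩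

theorem card_row2_union_overhang (hℓm : ℓ ≤ m) : #(row2 m ℓ ∪ overhang m ℓ) = m := by
  refine card_eq_of_bijOn_column (fun v _ => ?_) (fun v hv w hw hvw => ?_) fun x hx hxm => ?_
  · have := mem_iff.mp v.2; omega
  · have := mem_iff.mp v.2; have := mem_iff.mp w.2
    simp only [row2, overhang, Finset.mem_union, Finset.mem_filter, Finset.mem_univ,
      true_and] at hv hw
    exact Subtype.ext (Prod.ext hvw (by omega))
  · by_cases hxℓ : x ≤ ℓ
    · exact ⟨⟨(x, 2), mem_iff.mpr ⟨hx, Or.inr ⟨rfl, hxℓ⟩⟩⟩, by simp [row2], rfl⟩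
    · exact ⟨⟨(x, 1), mk_one_mem hx hxm⟩, by simp [overhang]; omega, rfl⟩

theorem isClique_row1 : (𝓡).IsClique (row1 m ℓ : Set 𝔹) :=
  fun v hv w hw hvw => by
    simp only [row1, Finset.coe_filter, Finset.mem_univ, true_and] at hv hw
    refine rookGraph_adj_iff.mpr ⟨fun h => hvw (Subtype.ext (Prod.ext h.1 h.2)), Or.inr ?_⟩
    rw [hv, hw]

theorem disjoint_row2_overhang : Disjoint (row2 m ℓ) (overhang m ℓ) :=
  Finset.disjoint_left.mpr fun v hv hv' => by
    have := mem_iff.mp v.2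
    simp only [row2, overhang, Finset.mem_filter, Finset.mem_univ, true_and] at hv hv'
    omega

variable {E h : {p // p ∈ Sm2l m ℓ} → ℤ}

theorem eq_on_row1_of_effective (hE : Effective E)
    (hEh : Effective fun w => E w + lap 𝓡 h w) (hdeg : degD E + 2 ≤ m) :
    ∀ u ∈ row1 m ℓ, ∀ v ∈ row1 m ℓ, h u = h v :=
  eq_on_clique_of_effective isClique_row1 hE hEh (by rw [card_row1]; omega)

theorem lap_eq_zero_of_mem_overhang (hh : ∀ u ∈ row1 m ℓ, ∀ v ∈ row1 m ℓ, h u = h v)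
    {v : 𝔹} (hv : v ∈ overhang m ℓ) : lap 𝓡 h v = 0 := by
  have := mem_iff.mp v.2
  simp only [overhang, Finset.mem_filter, Finset.mem_univ, true_and] at hv
  have hv1 : v ∈ row1 m ℓ := by
    simp only [row1, Finset.mem_filter, Finset.mem_univ, true_and]; omega
  refine lap_eq_zero_of_forall_adj fun u huv => hh u ?_ v hv1
  have := mem_iff.mp u.2; have := rookGraph_adj_iff.mp huv
  simp only [row1, Finset.mem_filter, Finset.mem_univ, true_and]
  omega

theorem card_row2_le_cutSize (hℓm : ℓ ≤ m) {A : Finset 𝔹}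
    (hA : A ⊆ row2 m ℓ) (hAne : A.Nonempty) : #(row2 m ℓ) ≤ cutSize 𝓡 A := by
  -- Each `v ∈ A` has the box below it and all of `row2 m ℓ \ A` as neighbours outside `A`.
  have hmul : #A * (#(row2 m ℓ \ A) + 1) ≤ cutSize 𝓡 A := by
    refine card_mul_le_cutSize subset_rfl fun v hv => ?_
    have hv2 := hA hv
    simp only [row2, Finset.mem_filter, Finset.mem_univ, true_and] at hv2
    have hvm := mem_iff.mp v.2
    set v₁ : 𝔹 := ⟨(v.1.1, 1), mk_one_mem hvm.1 (by omega)⟩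
    have hv₁ : v₁ ∉ row2 m ℓ := by simp [row2, v₁]
    rw [← Finset.card_insert_of_notMem fun h => hv₁ (Finset.sdiff_subset h)]
    refine Finset.card_le_card fun w hw => ?_
    simp only [Finset.mem_filter, Finset.mem_compl, Finset.mem_insert, Finset.mem_sdiff,
      row2, Finset.mem_univ, true_and] at hw ⊢
    rcases hw with rfl | ⟨hw2, hwA⟩
    · exact ⟨fun h => hv₁ (hA h), rookGraph_adj_iff.mpr
        ⟨fun h => absurd (h.2.trans hv2 : (1 : ℕ) = 2) (by norm_num), Or.inl rfl⟩⟩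
    · exact ⟨hwA, rookGraph_adj_iff.mpr ⟨fun h => hwA (Subtype.ext (Prod.ext h.1 h.2) ▸ hv),
        Or.inr (hw2.trans hv2.symm)⟩⟩
  have hsplit := Finset.card_sdiff_add_card_eq_card hA
  have hApos := hAne.card_pos
  nlinarith

/-- Raising part of row 2 above row 1 would need `ℓ` chips there, on top of the `m - ℓ` chips
on the overhang. -/
theorem le_of_eq_on_row1 (hℓm : ℓ ≤ m) (hE : Effective E) (hdeg : degD E < m)
    (hover : ∀ v ∈ overhang m ℓ, 0 < E v)
    (hEh : Effective fun w => E w + lap 𝓡 h w) {c : ℤ}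
    (hc : ∀ v ∈ row1 m ℓ, h v = c) : ∀ v, h v ≤ c := by
  by_contra! ⟨u, hu⟩
  set A : Finset 𝔹 := {v | c + 1 ≤ h v}
  have hA : A ⊆ row2 m ℓ := fun v hv => by
    have := mem_iff.mp v.2
    have := hc v
    simp only [A, row1, row2, Finset.mem_filter, Finset.mem_univ, true_and] at hv this ⊢
    omega
  have hcut := card_row2_le_cutSize hℓm hA ⟨u, by simp [A]; omega⟩
  have hAE : (cutSize 𝓡 A : ℤ) ≤ ∑ v ∈ A, E v :=
    cutSize_le_sum_of_effective hEh (c + 1)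
  have hoverE : #(overhang m ℓ) • (1 : ℤ) ≤ ∑ v ∈ overhang m ℓ, E v :=
    Finset.card_nsmul_le_sum _ _ _ fun v hv => hover v hv
  have htotal := sum_le_degD hE (A ∪ overhang m ℓ)
  have hm := card_row2_union_overhang hℓm
  rw [Finset.sum_union (disjoint_row2_overhang.mono_left hA)] at htotal
  rw [Finset.card_union_of_disjoint disjoint_row2_overhang] at hm
  rw [nsmul_eq_mul, mul_one] at hoverE
  omega

theorem lap_eq_zero_of_effective (hℓm : ℓ ≤ m) (hE : Effective E) (hdeg : degD E + 2 ≤ m)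
    (hover : ∀ v ∈ overhang m ℓ, 0 < E v)
    (hEh : Effective fun w => E w + lap 𝓡 h w) (v : 𝔹) :
    lap 𝓡 h v = 0 := by
  have hrow1 := eq_on_row1_of_effective hE hEh hdeg
  have hm : 1 ≤ m := by
    have : ∑ v ∈ ∅, E v ≤ degD E := sum_le_degD hE ∅
    rw [Finset.sum_empty] at this
    omega
  set p : 𝔹 := ⟨(1, 1), mk_one_mem le_rfl hm⟩
  have hc : ∀ v ∈ row1 m ℓ, h v = h p := fun v hv => hrow1 v hv p (by simp [row1, p])
  have hle := le_of_eq_on_row1 hℓm hE (by omega) hover hEh hc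
  -- Firing `-h` from `E + lap h` returns to `E`, so the same bound applies to `-h`.
  have hge := le_of_eq_on_row1 (h := -h) hℓm hEh
    (by rw [LinEquiv.degD_eq ⟨h, fun _ => rfl⟩]; omega)
    (fun v hv => by rw [lap_eq_zero_of_mem_overhang hrow1 hv, add_zero]; exact hover v hv)
    (by simpa only [lap_neg, add_neg_cancel_right] using hE)
    (fun v hv => by rw [Pi.neg_apply, hc v hv])
  exact lap_eq_zero_of_forall_adj fun u _ => by
    have := hle u; have := hle v; have := hge u; have := hge v
    simp only [Pi.neg_apply] at *
    omega

theorem le_degD_of_positiveRank (hℓm : ℓ < m) {D : 𝔹 → ℤ}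
    (hD : PositiveRank 𝓡 D) : (m : ℤ) - 1 ≤ degD D := by
  by_contra! hlt
  obtain ⟨E, hDE, hE, -⟩ := hD ⟨(1, 1), mk_one_mem le_rfl (by omega)⟩
  have hdeg : degD E + 2 ≤ m := by rw [hDE.degD_eq]; omega
  have hfire : ∀ v, ∃ h, (Effective fun w => E w + lap 𝓡 h w) ∧
      0 < E v + lap 𝓡 h v := fun v => by
    obtain ⟨E', hDE', hE', hv⟩ := hD v
    obtain ⟨h, hh⟩ := hDE.symm.trans hDE'
    exact ⟨h, fun w => by simpa only [hh w] using hE' w, by simpa only [hh v] using hv⟩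
  have hover : ∀ v ∈ overhang m ℓ, 0 < E v := fun v hv => by
    obtain ⟨h, hEh, hpos⟩ := hfire v
    rwa [lap_eq_zero_of_mem_overhang (eq_on_row1_of_effective hE hEh hdeg) hv, add_zero] at hpos
  have hpos : ∀ v, 0 < E v := fun v => by
    obtain ⟨h, hEh, hpos⟩ := hfire v
    rwa [lap_eq_zero_of_effective hℓm.le hE hdeg hover hEh v, add_zero] at hpos
  have hrow1 : #(row1 m ℓ) • (1 : ℤ) ≤ ∑ v ∈ row1 m ℓ, E v :=
    Finset.card_nsmul_le_sum _ _ _ fun v _ => hpos v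
  have := sum_le_degD hE (row1 m ℓ)
  rw [card_row1, nsmul_eq_mul, mul_one] at hrow1
  omega

theorem effective_Dxy (F : Finset (ℕ × ℕ)) (x y : ℕ) : Effective (Dxy F x y) :=
  fun p => by unfold Dxy; split_ifs <;> norm_num

theorem degD_Dxy (hm : 1 ≤ m) : degD (Dxy (Sm2l m ℓ) m 2) = m - 1 := by
  have hcard : #{v : 𝔹 | v.1.1 ≠ m ∧ v.1.2 ≠ 2} = m - 1 := by
    refine card_eq_of_bijOn_column (fun v hv => ?_) (fun v hv w hw hvw => ?_) fun x hx hxm => ?_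
    · have := mem_iff.mp v.2; simp only [Finset.mem_filter, Finset.mem_univ, true_and] at hv
      omega
    · have := mem_iff.mp v.2; have := mem_iff.mp w.2
      simp only [Finset.mem_filter, Finset.mem_univ, true_and] at hv hw
      exact Subtype.ext (Prod.ext hvw (by omega))
    · exact ⟨⟨(x, 1), mk_one_mem hx (by omega)⟩, by simp; omega, rfl⟩
  simp only [degD, Dxy]
  rw [Finset.sum_boole, hcard]
  omega

theorem exists_linEquiv_Dxy_pos_of_col_eq (hm : 2 ≤ m) (hℓm : ℓ < m) {v : 𝔹}
    (hv : v.1.1 = m) : ∃ E, LinEquiv 𝓡 (Dxy (Sm2l m ℓ) m 2) E ∧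
      Effective E ∧ 0 < E v := by
  have hvm := mem_iff.mp v.2
  refine ⟨_, ⟨fun u => if u ∈ ({v}ᶜ : Finset 𝔹) then 1 else 0, fun _ => rfl⟩,
    fun w => ?_, ?_⟩
  · dsimp only
    by_cases hw : w = v
    · rw [lap_indicator_of_notMem (by simp [hw])]
      have := effective_Dxy (Sm2l m ℓ) m 2 w
      omega
    · rw [lap_indicator_of_mem (by simpa), compl_compl, Finset.filter_singleton]
      have hwm := mem_iff.mp w.2
      split_ifs with hadj
      · have := rookGraph_adj_iff.mp hadj
        have : ¬(w.1.1 = v.1.1 ∧ w.1.2 = v.1.2) := fun h => hw (Subtype.ext (Prod.ext h.1 h.2))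
        simp only [Dxy, Finset.card_singleton]
        split_ifs <;> omega
      · have := effective_Dxy (Sm2l m ℓ) m 2 w
        simp only [Finset.card_empty]
        omega
  · rw [lap_indicator_of_notMem (by simp)]
    have hcorner : (⟨(1, 1), mk_one_mem le_rfl (by omega)⟩ : 𝔹) ∈
        ({v}ᶜ : Finset _).filter ((𝓡).Adj · v) := by
      simp only [Finset.mem_filter, Finset.mem_compl, Finset.mem_singleton, Subtype.ext_iff,
        Prod.ext_iff, rookGraph_adj_iff]
      omega
    have := Finset.card_pos.mpr ⟨_, hcorner⟩
    have := effective_Dxy (Sm2l m ℓ) m 2 v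
    omega

theorem exists_linEquiv_Dxy_pos_of_row_eq_two (hℓm : ℓ < m) {v : 𝔹} (hv : v.1.2 = 2) :
    ∃ E, LinEquiv 𝓡 (Dxy (Sm2l m ℓ) m 2) E ∧ Effective E ∧ 0 < E v := by
  have hvm := mem_iff.mp v.2
  refine ⟨_, ⟨fun u => if u ∈ row1 m ℓ then 1 else 0, fun _ => rfl⟩, fun w => ?_, ?_⟩
  · dsimp only
    have hwm := mem_iff.mp w.2
    by_cases hw : w ∈ row1 m ℓ
    · rw [lap_indicator_of_mem hw]
      set above := (row1 m ℓ)ᶜ.filter ((𝓡).Adj · w)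
      have mem_above : ∀ {u}, u ∈ above → u.1.1 = w.1.1 ∧ u.1.2 = 2 := fun {u} hu => by
        have := mem_iff.mp u.2
        simp only [above, row1, Finset.mem_filter, Finset.mem_compl, Finset.mem_univ, true_and,
          rookGraph_adj_iff] at hu hw
        omega
      have hle : #above ≤ 1 := Finset.card_le_one.mpr fun a ha b hb =>
        Subtype.ext (Prod.ext ((mem_above ha).1.trans (mem_above hb).1.symm)
          ((mem_above ha).2.trans (mem_above hb).2.symm))
      have hD : #above ≠ 0 → Dxy (Sm2l m ℓ) m 2 w = 1 := fun h => by
        obtain ⟨u, hu⟩ := Finset.card_pos.mp (Nat.pos_of_ne_zero h)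
        have := mem_iff.mp u.2
        have := mem_above hu
        simp only [row1, Finset.mem_filter, Finset.mem_univ, true_and] at hw
        simp only [Dxy]
        split_ifs <;> omega
      have := effective_Dxy (Sm2l m ℓ) m 2 w
      omega
    · rw [lap_indicator_of_notMem hw]
      have := effective_Dxy (Sm2l m ℓ) m 2 w
      omega
  · rw [lap_indicator_of_notMem (by simp [row1]; omega)]
    have hbelow : (⟨(v.1.1, 1), mk_one_mem hvm.1 (by omega)⟩ : 𝔹) ∈
        (row1 m ℓ).filter ((𝓡).Adj · v) := by
      simp only [row1, Finset.mem_filter, Finset.mem_univ, true_and, rookGraph_adj_iff, true_or,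
        and_true]
      omega
    have := Finset.card_pos.mpr ⟨_, hbelow⟩
    have := effective_Dxy (Sm2l m ℓ) m 2 v
    omega

theorem positiveRank_Dxy (hm : 2 ≤ m) (hℓm : ℓ < m) :
    PositiveRank 𝓡 (Dxy (Sm2l m ℓ) m 2) := by
  intro v
  have hvm := mem_iff.mp v.2
  by_cases hv : v.1.1 = m
  · exact exists_linEquiv_Dxy_pos_of_col_eq hm hℓm hv
  by_cases hv2 : v.1.2 = 2
  · exact exists_linEquiv_Dxy_pos_of_row_eq_two hℓm hv2
  exact ⟨_, LinEquiv.refl _, effective_Dxy _ _ _, by simp only [Dxy]; split_ifs <;> omega⟩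

end Sm2l

theorem stmt7_general (m ℓ : ℕ) (hm : 2 ≤ m) (hℓ2 : ℓ < m) :
    IsLeast (gonSet (Sm2l m ℓ)) ((m : ℤ) - 1) :=
  ⟨⟨_, Sm2l.positiveRank_Dxy hm hℓ2, Sm2l.degD_Dxy (by omega)⟩,
    fun _ ⟨_, hD, hdeg⟩ => hdeg ▸ Sm2l.le_degD_of_positiveRank hℓ2 hD⟩

theorem stmt7 (m ℓ : ℕ) (hm : 2 ≤ m) (hℓ1 : 1 ≤ ℓ) (hℓ2 : ℓ < m) :
    IsLeast (gonSet (Sm2l m ℓ)) ((m : ℤ) - 1) :=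
  stmt7_general m ℓ hm hℓ2
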